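/- For every α ∈ (2/3, 1), the sequence (c_p)_{p≥2} converges as p → ∞, and its limit equals 1/(α·√(α(3α−2))) = (α·δ(α))^{−1}. -/

import Mathlib

/-!
The solution is explicit: `c_p = α⁻² ∑_{k < p-1} binom(2k, k) xᵏ` with `x = (1 - α)/(2α)`.
Writing `q₋₍ₘ₊₁₎(α) = x^(m+1) (2α Cₘ + (α - 1) Cₘ₊₁)` with Catalan numbers `Cₘ`, the recursion
for the increments `binom(2k, k) xᵏ` reduces to the convolution identity
`binom(2m+2, m+1) = 2 ∑_{i+j=m} Cᵢ binom(2j, j)`, and summing increments gives the recursion for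
the partial sums. Since `α ≠ 0`, a solution is determined by `c₃`. The limit is then
`α⁻² ∑ₖ binom(2k, k) xᵏ = α⁻² (1 - 4x)^(-1/2)`, the generating function being identified through
its square `∑_{i+j=n} binom(2i, i) binom(2j, j) = 4ⁿ`; as `1 - 4x = (3α - 2)/α`, this is
`1/(α √(α(3α - 2)))`.
-/

/-- The peeling step weight `q₋ᵢ(α)` for `i ≥ 1`. -/
noncomputable def qneg (α : ℝ) (i : ℕ) : ℝ :=
  2 / 4 ^ i *
    ((Nat.factorial (2 * i - 2) : ℝ) /
      ((Nat.factorial (i - 1) : ℝ) * (Nat.factorial (i + 1) : ℝ))) *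
    (2 / α - 2) ^ i * ((3 * α - 2) * i + 1)

open Finset Filter

namespace Nat

theorem centralBinom_succ_add_two_mul_catalan (n : ℕ) :
    centralBinom (n + 1) + 2 * catalan n = 4 * centralBinom n := by
  refine Nat.eq_of_mul_eq_mul_left (by omega : 0 < n + 1) ?_
  linear_combination succ_mul_centralBinom_succ n + 2 * succ_mul_catalan_eq_centralBinom n

theorem centralBinom_succ_eq_two_mul_sum_catalan_mul (n : ℕ) :
    centralBinom (n + 1) = 2 * ∑ ij ∈ antidiagonal n, catalan ij.1 * centralBinom ij.2 := by
  induction n with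
  | zero => simp [centralBinom, catalan_zero]
  | succ n ih =>
    have hshift : ∑ ij ∈ antidiagonal n, catalan ij.1 * centralBinom (ij.2 + 1)
        + 2 * catalan (n + 1) = 4 * ∑ ij ∈ antidiagonal n, catalan ij.1 * centralBinom ij.2 := by
      rw [catalan_succ', mul_sum, mul_sum, ← sum_add_distrib]
      refine sum_congr rfl fun ij _ => ?_
      linear_combination catalan ij.1 * centralBinom_succ_add_two_mul_catalan ij.2
    rw [Finset.Nat.sum_antidiagonal_succ', centralBinom_zero, mul_one]
    linear_combination centralBinom_succ_add_two_mul_catalan (n + 1) - 2 * hshift + 4 * ih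

theorem sum_antidiagonal_centralBinom_mul_centralBinom (n : ℕ) :
    ∑ ij ∈ antidiagonal n, centralBinom ij.1 * centralBinom ij.2 = 4 ^ n := by
  induction n with
  | zero => simp [centralBinom]
  | succ n ih =>
    have hshift : ∑ ij ∈ antidiagonal n, centralBinom (ij.1 + 1) * centralBinom ij.2
        + 2 * ∑ ij ∈ antidiagonal n, catalan ij.1 * centralBinom ij.2
        = 4 * ∑ ij ∈ antidiagonal n, centralBinom ij.1 * centralBinom ij.2 := by
      rw [mul_sum, mul_sum, ← sum_add_distrib]
      refine sum_congr rfl fun ij _ => ?_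
      linear_combination centralBinom ij.2 * centralBinom_succ_add_two_mul_catalan ij.1
    rw [Finset.Nat.sum_antidiagonal_succ, centralBinom_zero, one_mul]
    linear_combination hshift + centralBinom_succ_eq_two_mul_sum_catalan_mul n + 4 * ih

end Nat

theorem catalan_mul_factorial_mul_factorial (n : ℕ) :
    catalan n * ((n + 1).factorial * n.factorial) = (2 * n).factorial := by
  have hchoose := Nat.choose_mul_factorial_mul_factorial (by omega : n ≤ 2 * n)
  rw [show 2 * n - n = n by omega, ← Nat.centralBinom, ← succ_mul_catalan_eq_centralBinom]
    at hchoose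
  rw [← hchoose, Nat.factorial_succ]
  ring

theorem succ_succ_mul_catalan_succ (n : ℕ) :
    (n + 2) * catalan (n + 1) = 2 * (2 * n + 1) * catalan n := by
  refine Nat.eq_of_mul_eq_mul_left (by omega : 0 < n + 1) ?_
  rw [succ_mul_catalan_eq_centralBinom, Nat.succ_mul_centralBinom_succ,
    ← succ_mul_catalan_eq_centralBinom]
  ring

theorem hasSum_centralBinom_mul_pow {x : ℝ} (hx0 : 0 ≤ x) (hx : 4 * x < 1) :
    HasSum (fun k => (Nat.centralBinom k : ℝ) * x ^ k) (√(1 - 4 * x))⁻¹ := by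
  set f : ℕ → ℝ := fun k => (Nat.centralBinom k : ℝ) * x ^ k
  have hf0 : ∀ k, 0 ≤ f k := fun k => by positivity
  have hsum : Summable f := by
    refine (summable_geometric_of_lt_one (by positivity) hx).of_nonneg_of_le hf0 fun k => ?_
    rw [mul_pow]
    exact mul_le_mul_of_nonneg_right (mod_cast Nat.centralBinom_le_four_pow k) (by positivity)
  have hnorm : Summable fun k => ‖f k‖ := by simpa [Real.norm_of_nonneg (hf0 _)] using hsum
  have hcauchy : ∀ n, ∑ ij ∈ antidiagonal n, f ij.1 * f ij.2 = (4 * x) ^ n := fun n => by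
    have hterm : ∀ ij ∈ antidiagonal n, f ij.1 * f ij.2
        = ((Nat.centralBinom ij.1 * Nat.centralBinom ij.2 : ℕ) : ℝ) * x ^ n := by
      intro ij hij
      rw [← mem_antidiagonal.mp hij]
      push_cast
      ring
    rw [sum_congr rfl hterm, ← sum_mul, ← Nat.cast_sum,
      Nat.sum_antidiagonal_centralBinom_mul_centralBinom, mul_pow]
    push_cast
    ring
  have hsq : (∑' k, f k) ^ 2 = (1 - 4 * x)⁻¹ := by
    rw [sq, tsum_mul_tsum_eq_tsum_sum_antidiagonal_of_summable_norm hnorm hnorm,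
      tsum_congr hcauchy, tsum_geometric_of_lt_one (by positivity) hx]
  convert hsum.hasSum
  rw [← Real.sqrt_inv, ← hsq, Real.sqrt_sq (tsum_nonneg hf0)]

def IsHarmonic {R : Type*} [Semiring R] (a : R) (w c : ℕ → R) : Prop :=
  ∀ p : ℕ, 2 ≤ p → c p = a * c (p + 1) + ∑ i ∈ Icc 1 (p - 2), w i * c (p - i)

namespace IsHarmonic

variable {R : Type*} {a : R} {w c d : ℕ → R}

theorem const_mul [CommSemiring R] (hc : IsHarmonic a w c) (r : R) :
    IsHarmonic a w fun p => r * c p := by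
  intro p hp
  simp only [hc p hp, mul_add, mul_sum, mul_left_comm r]

theorem eq_of_eq_three [Ring R] [NoZeroDivisors R] (ha : a ≠ 0) (hc : IsHarmonic a w c)
    (hd : IsHarmonic a w d) (h3 : c 3 = d 3) : ∀ p, 2 ≤ p → c p = d p := by
  intro p hp
  induction p using Nat.strong_induction_on with
  | _ p ih =>
    match p, hp with
    | 2, _ => simp [hc 2 le_rfl, hd 2 le_rfl, h3]
    | 3, _ => exact h3
    | q + 4, _ =>
      have hsum : ∑ i ∈ Icc 1 (q + 3 - 2), w i * c (q + 3 - i) =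
          ∑ i ∈ Icc 1 (q + 3 - 2), w i * d (q + 3 - i) :=
        sum_congr rfl fun i hi => by
          have := mem_Icc.mp hi
          rw [ih (q + 3 - i) (by omega) (by omega)]
      have hstep := (hc (q + 3) (by omega)).symm.trans (ih (q + 3) (by omega) (by omega))
      rw [hd (q + 3) (by omega), hsum] at hstep
      exact mul_left_cancel₀ ha (add_right_cancel hstep)

end IsHarmonic

theorem isHarmonic_sum_range {R : Type*} [CommRing R] {a : R} {w b : ℕ → R}
    (h0 : b 0 = a * (b 0 + b 1))
    (hb : ∀ m, b (m + 1) = a * b (m + 2) + ∑ i ∈ Icc 1 (m + 1), w i * b (m + 1 - i)) :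
    IsHarmonic a w fun p => ∑ k ∈ range (p - 1), b k := by
  suffices h : ∀ m, ∑ k ∈ range (m + 1), b k = a * ∑ k ∈ range (m + 2), b k +
      ∑ i ∈ Icc 1 m, w i * ∑ k ∈ range (m + 1 - i), b k by
    intro p hp
    obtain ⟨m, rfl⟩ := Nat.exists_eq_add_of_le' hp
    have hidx : ∀ i, m + 2 - i - 1 = m + 1 - i := fun i => by omega
    simpa only [Nat.add_sub_cancel, Nat.add_succ_sub_one, hidx] using h m
  intro m
  induction m with
  | zero => simpa [sum_range_succ] using h0
  | succ m ih =>
    have hshift : ∑ i ∈ Icc 1 (m + 1), w i * ∑ k ∈ range (m + 2 - i), b k =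
        ∑ i ∈ Icc 1 m, w i * ∑ k ∈ range (m + 1 - i), b k +
          ∑ i ∈ Icc 1 (m + 1), w i * b (m + 1 - i) := by
      have hterm : ∀ i ∈ Icc 1 (m + 1), w i * ∑ k ∈ range (m + 2 - i), b k =
          w i * ∑ k ∈ range (m + 1 - i), b k + w i * b (m + 1 - i) := fun i hi => by
        rw [show m + 2 - i = m + 1 - i + 1 by have := mem_Icc.mp hi; omega, sum_range_succ, mul_add]
      rw [sum_congr rfl hterm, sum_add_distrib, sum_Icc_succ_top (by omega : 1 ≤ m + 1),
        Nat.sub_self, sum_range_zero, mul_zero, add_zero]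
    rw [sum_range_succ, hshift, sum_range_succ _ (m + 2)]
    linear_combination ih + hb m

theorem sum_Icc_one_eq_sum_antidiagonal {M : Type*} [AddCommMonoid M] (f : ℕ → ℕ → M) (m : ℕ) :
    ∑ i ∈ Icc 1 (m + 1), f i (m + 1 - i) = ∑ ij ∈ antidiagonal m, f (ij.1 + 1) ij.2 := by
  rw [Nat.sum_antidiagonal_eq_sum_range_succ (fun i j => f (i + 1) j),
    ← Ico_add_one_right_eq_Icc, sum_Ico_eq_sum_range]
  refine sum_congr rfl fun k _ => ?_
  rw [add_comm 1 k, show m + 1 - (k + 1) = m - k by omega]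

theorem qneg_succ {α : ℝ} (hα : α ≠ 0) (m : ℕ) :
    qneg α (m + 1) = ((1 - α) / (2 * α)) ^ (m + 1) *
      (2 * α * catalan m + (α - 1) * catalan (m + 1)) := by
  have hfact : ((2 * m).factorial : ℝ) = catalan m * ((m + 1).factorial * m.factorial) := by
    exact_mod_cast (catalan_mul_factorial_mul_factorial m).symm
  have hcat : ((m : ℝ) + 2) * catalan (m + 1) = 2 * (2 * m + 1) * catalan m := by
    exact_mod_cast succ_succ_mul_catalan_succ m
  have hbase : 2 / α - 2 = 4 * ((1 - α) / (2 * α)) := by field_simp; ring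
  rw [qneg, show 2 * (m + 1) - 2 = 2 * m by omega, Nat.add_sub_cancel, hfact,
    Nat.factorial_succ (m + 1), hbase, mul_pow]
  generalize (1 - α) / (2 * α) = x
  push_cast
  field_simp
  linear_combination (1 - α) * x ^ (m + 1) * hcat

noncomputable def harmonicIncrement (α : ℝ) (k : ℕ) : ℝ :=
  Nat.centralBinom k * ((1 - α) / (2 * α)) ^ k

theorem harmonicIncrement_zero_eq {α : ℝ} (hα : α ≠ 0) :
    harmonicIncrement α 0 = α * (harmonicIncrement α 0 + harmonicIncrement α 1) := by
  norm_num [harmonicIncrement, Nat.centralBinom]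
  field_simp
  ring

theorem harmonicIncrement_succ_eq {α : ℝ} (hα : α ≠ 0) (m : ℕ) :
    harmonicIncrement α (m + 1) = α * harmonicIncrement α (m + 2) +
      ∑ i ∈ Icc 1 (m + 1), qneg α i * harmonicIncrement α (m + 1 - i) := by
  set x := (1 - α) / (2 * α) with hx
  have hαx : 2 * α * x = 1 - α := by rw [hx]; field_simp
  have hS₀ : (Nat.centralBinom (m + 1) : ℝ) =
      2 * ∑ ij ∈ antidiagonal m, (catalan ij.1 : ℝ) * Nat.centralBinom ij.2 := by
    exact_mod_cast Nat.centralBinom_succ_eq_two_mul_sum_catalan_mul m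
  have hS₁ : (Nat.centralBinom (m + 2) : ℝ) = 2 * (Nat.centralBinom (m + 1) +
      ∑ ij ∈ antidiagonal m, (catalan (ij.1 + 1) : ℝ) * Nat.centralBinom ij.2) := by
    have h := Nat.centralBinom_succ_eq_two_mul_sum_catalan_mul (m + 1)
    rw [Finset.Nat.sum_antidiagonal_succ, catalan_zero, one_mul] at h
    exact_mod_cast h
  have hterm : ∀ ij ∈ antidiagonal m, qneg α (ij.1 + 1) * harmonicIncrement α ij.2 =
      x ^ (m + 1) * (2 * α * ((catalan ij.1 : ℝ) * Nat.centralBinom ij.2) +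
        (α - 1) * ((catalan (ij.1 + 1) : ℝ) * Nat.centralBinom ij.2)) := by
    intro ij hij
    rw [qneg_succ hα, harmonicIncrement, ← mem_antidiagonal.mp hij, ← hx]
    ring
  rw [sum_Icc_one_eq_sum_antidiagonal (fun i j => qneg α i * harmonicIncrement α j),
    sum_congr rfl hterm, ← mul_sum, sum_add_distrib, ← mul_sum, ← mul_sum]
  simp only [harmonicIncrement, ← hx]
  rw [hS₁, hS₀]
  clear_value x
  generalize ∑ ij ∈ antidiagonal m, (catalan ij.1 : ℝ) * Nat.centralBinom ij.2 = S₀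
  generalize ∑ ij ∈ antidiagonal m, (catalan (ij.1 + 1) : ℝ) * Nat.centralBinom ij.2 = S₁
  linear_combination -x ^ (m + 1) * (2 * S₀ + S₁) * hαx

theorem harmonic_sequence_limit_general (α : ℝ) (hα : α ∈ Set.Ioo (2/3 : ℝ) 1) (c : ℕ → ℝ)
    (h3 : c 3 = α⁻¹ ^ 3)
    (hrec : ∀ p : ℕ, 2 ≤ p →
      c p = α * c (p + 1) + ∑ i ∈ Finset.Icc 1 (p - 2), qneg α i * c (p - i)) :
    Filter.Tendsto c Filter.atTop
      (nhds (1 / (α * Real.sqrt (α * (3 * α - 2))))) := by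
  obtain ⟨hα23, hα1⟩ := hα
  have hα0 : 0 < α := by linarith
  set g : ℕ → ℝ := fun p => α⁻¹ ^ 2 * ∑ k ∈ range (p - 1), harmonicIncrement α k
  have hg : IsHarmonic α (qneg α) g :=
    (isHarmonic_sum_range (harmonicIncrement_zero_eq hα0.ne')
      (harmonicIncrement_succ_eq hα0.ne')).const_mul _
  have hg3 : g 3 = α⁻¹ ^ 3 := by
    norm_num [g, sum_range_succ, harmonicIncrement, Nat.centralBinom]
    field_simp
    ring
  have hcg : ∀ p, 2 ≤ p → c p = g p :=
    IsHarmonic.eq_of_eq_three hα0.ne' hrec hg (h3.trans hg3.symm)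
  set x := (1 - α) / (2 * α) with hx
  have hx0 : 0 ≤ x := div_nonneg (by linarith) (by linarith)
  have hx1 : 4 * x < 1 := by rw [hx, ← sub_pos]; field_simp; linarith
  have hlim : Tendsto g atTop (nhds (α⁻¹ ^ 2 * (√(1 - 4 * x))⁻¹)) :=
    ((hasSum_centralBinom_mul_pow hx0 hx1).tendsto_sum_nat.comp
      (tendsto_sub_atTop_nat 1)).const_mul _
  have hdisc : α * (3 * α - 2) = α ^ 2 * (1 - 4 * x) := by rw [hx]; field_simp; ring
  rw [hdisc, Real.sqrt_mul (sq_nonneg α), Real.sqrt_sq hα0.le]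
  convert hlim.congr' (eventually_atTop.2 ⟨2, fun p hp => (hcg p hp).symm⟩) using 2
  field_simp

/-- For `α ∈ (2/3, 1)`, the sequence `(c_p)` determined by `c₀ = c₁ = 0`, `c₃ = α⁻³`
and the harmonicity recursion `c_p = α c_{p+1} + ∑_{i=1}^{p−2} q₋ᵢ(α) c_{p−i}` (`p ≥ 2`)
converges as `p → ∞` to `1/(α·√(α(3α−2))) = (α δ(α))⁻¹`. -/
theorem harmonic_sequence_limit (α : ℝ) (hα : α ∈ Set.Ioo (2/3 : ℝ) 1) (c : ℕ → ℝ)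
    (h0 : c 0 = 0) (h1 : c 1 = 0) (h3 : c 3 = α⁻¹ ^ 3)
    (hrec : ∀ p : ℕ, 2 ≤ p →
      c p = α * c (p + 1) + ∑ i ∈ Finset.Icc 1 (p - 2), qneg α i * c (p - i)) :
    Filter.Tendsto c Filter.atTop
      (nhds (1 / (α * Real.sqrt (α * (3 * α - 2))))) :=
  harmonic_sequence_limit_general α hα c h3 hrec
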